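/- arXiv:2007.05521 — 2 statements merged into one kernel-verified Lean document; each statement's English description precedes it below -/
import Mathlib

section
/- Let B₁ ∈ ℝ^{K×K} be diagonalizable as B₁ = P_B D_B P_B⁻¹ with D_B diagonal, let U ∈ ℝ^{N×K} have orthonormal columns, and G = U B₁ Uᵀ + β₂ I_N with |β₂| + σ₁(B₁) < 1. Then for every complex z with |z| = 1, the matrix z I_N − G is invertible, and the smallest eigenvalue of (z I_N − G)*(z I_N − G) over all |z|=1 is at least (1 − |β₂| − σ₁(B₁))² σ_K(P_B)² σ_K(P_B⁻¹)², where σ_K denotes the smallest singular value. -/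
open Matrix

/-- Euclidean norm of a vector in `ℝ^n`. -/
noncomputable def enorm {n : ℕ} (x : Fin n → ℝ) : ℝ := Real.sqrt (∑ i, x i ^ 2)

/-- Largest singular value (operator norm) of a real matrix. -/
noncomputable def sigma1 {m n : ℕ} (M : Matrix (Fin m) (Fin n) ℝ) : ℝ :=
  sSup ((fun x => _root_.enorm (M *ᵥ x)) '' {x | _root_.enorm x = 1})

/-- Smallest singular value of a real square matrix. -/
noncomputable def sigmaMin {n : ℕ} (M : Matrix (Fin n) (Fin n) ℝ) : ℝ :=
  sInf ((fun x => _root_.enorm (M *ᵥ x)) '' {x | _root_.enorm x = 1})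

/-! With orthonormal columns, `‖U‖ ≤ 1` in the `ℓ²` operator norm, so
`‖G‖ ≤ ‖B₁‖ + |β₂| = σ₁(B₁) + |β₂| < 1`, and complexifying a real matrix does not increase this
norm. Hence for `|z| = 1` we get `‖(z - G) v‖ ≥ c ‖v‖` with `c = 1 - |β₂| - σ₁(B₁) > 0`: the matrix
`z - G` is injective, hence invertible, and an eigenpair `(μ, v)` of `(z - G)* (z - G)` satisfies
`μ ‖v‖² = ‖(z - G) v‖² ≥ c² ‖v‖²`. The remaining factor is at most one: for a unit vector `e`,
`σ_K(P⁻¹) ≤ ‖P⁻¹ e‖` and `σ_K(P) ‖P⁻¹ e‖ ≤ ‖P P⁻¹ e‖ ≤ 1`. -/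

open scoped Matrix.Norms.L2Operator

open WithLp

lemma enorm_eq_norm_toLp {n : ℕ} (x : Fin n → ℝ) : _root_.enorm x = ‖toLp 2 x‖ := by
  simp [_root_.enorm, EuclideanSpace.norm_eq]

lemma sigma1_eq_l2_opNorm {m n : ℕ} (M : Matrix (Fin m) (Fin n) ℝ) : sigma1 M = ‖M‖ := by
  rw [Matrix.l2_opNorm_def, ← ContinuousLinearMap.sSup_sphere_eq_norm, sigma1]
  congr 1
  ext r
  constructor
  · rintro ⟨x, hx, rfl⟩
    exact ⟨toLp 2 x, by simpa [enorm_eq_norm_toLp] using hx, by simp [enorm_eq_norm_toLp]⟩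
  · rintro ⟨y, hy, rfl⟩
    exact ⟨ofLp y, by simpa [enorm_eq_norm_toLp] using hy, by simp [enorm_eq_norm_toLp]; rfl⟩

section RCLike

variable {𝕜 m n : Type*} [RCLike 𝕜] [Fintype m] [Fintype n] [DecidableEq n]

lemma Matrix.l2_opNorm_one_le : ‖(1 : Matrix n n 𝕜)‖ ≤ 1 := by
  rw [← diagonal_one, l2_opNorm_diagonal]
  exact pi_norm_le_iff_of_nonneg zero_le_one |>.mpr fun _ => by simp

lemma Matrix.l2_opNorm_le_one_of_conjTranspose_mul_self_eq_one {A : Matrix m n 𝕜}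
    (hA : Aᴴ * A = 1) : ‖A‖ ≤ 1 := by
  have h : ‖A‖ * ‖A‖ ≤ 1 := by
    rw [← l2_opNorm_conjTranspose_mul_self, hA]
    exact l2_opNorm_one_le
  nlinarith [norm_nonneg A]

lemma Matrix.l2_opNorm_mul_mul_conjTranspose_add_smul_one_le [DecidableEq m] {U : Matrix m n 𝕜}
    (hU : Uᴴ * U = 1) (B : Matrix n n 𝕜) (β : 𝕜) :
    ‖U * B * Uᴴ + β • (1 : Matrix m m 𝕜)‖ ≤ ‖B‖ + ‖β‖ := by
  have hU1 := l2_opNorm_le_one_of_conjTranspose_mul_self_eq_one hU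
  calc ‖U * B * Uᴴ + β • (1 : Matrix m m 𝕜)‖
      ≤ ‖U‖ * ‖B‖ * ‖Uᴴ‖ + ‖β‖ * ‖(1 : Matrix m m 𝕜)‖ := by
        grw [norm_add_le, norm_smul, l2_opNorm_mul, l2_opNorm_mul]
    _ ≤ 1 * ‖B‖ * 1 + ‖β‖ * 1 := by
        rw [l2_opNorm_conjTranspose]
        gcongr
        exact l2_opNorm_one_le
    _ = ‖B‖ + ‖β‖ := by ring

lemma Matrix.sub_l2_opNorm_mul_norm_le (A : Matrix n n 𝕜) (z : 𝕜) (v : n → 𝕜) :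
    (‖z‖ - ‖A‖) * ‖toLp 2 v‖ ≤ ‖toLp 2 ((z • 1 - A) *ᵥ v)‖ := by
  have hA : ‖toLp 2 (A *ᵥ v)‖ ≤ ‖A‖ * ‖toLp 2 v‖ := l2_opNorm_mulVec A (toLp 2 v)
  calc (‖z‖ - ‖A‖) * ‖toLp 2 v‖ ≤ ‖z • toLp 2 v‖ - ‖toLp 2 (A *ᵥ v)‖ := by
        rw [norm_smul]; linarith
    _ ≤ ‖z • toLp 2 v - toLp 2 (A *ᵥ v)‖ := norm_sub_norm_le _ _
    _ = ‖toLp 2 ((z • 1 - A) *ᵥ v)‖ := by simp [sub_mulVec, smul_mulVec]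

lemma Matrix.isUnit_of_mul_norm_le {A : Matrix n n 𝕜} {c : ℝ} (hc : 0 < c)
    (hA : ∀ v, c * ‖toLp 2 v‖ ≤ ‖toLp 2 (A *ᵥ v)‖) : IsUnit A := by
  refine mulVec_injective_iff_isUnit.mp fun u v huv => ?_
  have h := hA (u - v)
  rw [mulVec_sub, huv, sub_self, toLp_zero, norm_zero] at h
  simpa [sub_eq_zero] using nonpos_of_mul_nonpos_right h hc

lemma Matrix.sq_le_re_of_mem_spectrum_conjTranspose_mul_self {A : Matrix n n 𝕜} {c : ℝ}
    (hc : 0 ≤ c) (hA : ∀ v, c * ‖toLp 2 v‖ ≤ ‖toLp 2 (A *ᵥ v)‖) {μ : 𝕜}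
    (hμ : μ ∈ spectrum 𝕜 (Aᴴ * A)) : c ^ 2 ≤ RCLike.re μ := by
  rw [← spectrum_toLin'] at hμ
  obtain ⟨v, hv⟩ := (Module.End.hasEigenvalue_iff_mem_spectrum.mpr hμ).exists_hasEigenvector
  have hv0 : 0 < ‖toLp 2 v‖ := by simpa using hv.2
  have heig : toEuclideanCLM (n := n) (𝕜 := 𝕜) (Aᴴ * A) (toLp 2 v) = μ • toLp 2 v := by
    simpa using congrArg (toLp 2) hv.apply_eq_smul
  have hnorm : ‖toLp 2 (A *ᵥ v)‖ ^ 2 = RCLike.re μ * ‖toLp 2 v‖ ^ 2 := by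
    rw [← toEuclideanCLM_toLp, ContinuousLinearMap.apply_norm_sq_eq_inner_adjoint_right,
      ← ContinuousLinearMap.star_eq_adjoint, ← map_star, ← ContinuousLinearMap.mul_def, ← map_mul,
      star_eq_conjTranspose, heig, inner_smul_right, inner_self_eq_norm_sq_to_K]
    simp
  refine le_of_mul_le_mul_right ?_ (pow_pos hv0 2)
  rw [← hnorm, ← mul_pow]
  exact pow_le_pow_left₀ (by positivity) (hA v) 2

end RCLike

section Complexification

variable {m n : Type*} [Fintype n]

lemma EuclideanSpace.norm_toLp_sq_eq_re_add_im (w : n → ℂ) :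
    ‖toLp 2 w‖ ^ 2 = ‖toLp 2 (fun i => (w i).re)‖ ^ 2 + ‖toLp 2 (fun i => (w i).im)‖ ^ 2 := by
  simp only [EuclideanSpace.norm_sq_eq, ← Finset.sum_add_distrib]
  congr with i
  rw [Complex.sq_norm, Complex.normSq_apply, Real.norm_eq_abs, Real.norm_eq_abs, sq_abs, sq_abs,
    sq, sq]

lemma Matrix.re_map_ofReal_mulVec (M : Matrix m n ℝ) (v : n → ℂ) (i : m) :
    ((M.map (algebraMap ℝ ℂ) *ᵥ v) i).re = (M *ᵥ fun j => (v j).re) i := by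
  simp [mulVec, dotProduct, Complex.re_sum]

lemma Matrix.im_map_ofReal_mulVec (M : Matrix m n ℝ) (v : n → ℂ) (i : m) :
    ((M.map (algebraMap ℝ ℂ) *ᵥ v) i).im = (M *ᵥ fun j => (v j).im) i := by
  simp [mulVec, dotProduct, Complex.im_sum]

lemma Matrix.l2_opNorm_map_ofReal_le [Fintype m] [DecidableEq n] (M : Matrix m n ℝ) :
    ‖M.map (algebraMap ℝ ℂ)‖ ≤ ‖M‖ := by
  rw [l2_opNorm_def]
  refine ContinuousLinearMap.opNorm_le_bound _ (norm_nonneg M) fun x => ?_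
  set a : n → ℝ := fun j => (x j).re
  set b : n → ℝ := fun j => (x j).im
  have ha := l2_opNorm_mulVec M (toLp 2 a)
  have hb := l2_opNorm_mulVec M (toLp 2 b)
  refine le_of_pow_le_pow_left₀ two_ne_zero (by positivity) ?_
  calc ‖toLp 2 (M.map (algebraMap ℝ ℂ) *ᵥ ofLp x)‖ ^ 2
      = ‖toLp 2 (M *ᵥ a)‖ ^ 2 + ‖toLp 2 (M *ᵥ b)‖ ^ 2 := by
        simp only [EuclideanSpace.norm_toLp_sq_eq_re_add_im, re_map_ofReal_mulVec,
          im_map_ofReal_mulVec]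
        rfl
    _ ≤ (‖M‖ * ‖toLp 2 a‖) ^ 2 + (‖M‖ * ‖toLp 2 b‖) ^ 2 := by gcongr; exacts [ha, hb]
    _ = (‖M‖ * ‖x‖) ^ 2 := by
        rw [mul_pow, mul_pow, ← mul_add, ← EuclideanSpace.norm_toLp_sq_eq_re_add_im, mul_pow]

end Complexification

section SigmaMin

variable {n : ℕ}

lemma sigmaMin_nonneg (M : Matrix (Fin n) (Fin n) ℝ) : 0 ≤ sigmaMin M :=
  Real.sInf_nonneg <| by
    rintro _ ⟨x, -, rfl⟩
    exact Real.sqrt_nonneg _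

lemma sigmaMin_le {x : Fin n → ℝ} (M : Matrix (Fin n) (Fin n) ℝ) (hx : _root_.enorm x = 1) :
    sigmaMin M ≤ _root_.enorm (M *ᵥ x) :=
  csInf_le ⟨0, by rintro _ ⟨y, -, rfl⟩; exact Real.sqrt_nonneg _⟩ ⟨x, hx, rfl⟩

lemma sigmaMin_mul_enorm_le (M : Matrix (Fin n) (Fin n) ℝ) (x : Fin n → ℝ) :
    sigmaMin M * _root_.enorm x ≤ _root_.enorm (M *ᵥ x) := by
  rcases eq_or_ne x 0 with rfl | hx
  · simp [enorm_eq_norm_toLp]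
  have hpos : 0 < ‖toLp 2 x‖ := by simpa using hx
  have h := sigmaMin_le M (x := ‖toLp 2 x‖⁻¹ • x) <| by
    simp [enorm_eq_norm_toLp, norm_smul, hpos.ne']
  rw [mulVec_smul, enorm_eq_norm_toLp, toLp_smul, norm_smul, norm_inv, norm_norm,
    le_inv_mul_iff₀ hpos] at h
  rw [enorm_eq_norm_toLp, enorm_eq_norm_toLp, mul_comm]
  exact h

lemma sigmaMin_mul_sigmaMin_inv_le_one (P : Matrix (Fin n) (Fin n) ℝ) :
    sigmaMin P * sigmaMin P⁻¹ ≤ 1 := by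
  rcases isEmpty_or_nonempty (Fin n) with hn | ⟨⟨i⟩⟩
  · simp [sigmaMin, _root_.enorm]
  have he : _root_.enorm (Pi.single i 1 : Fin n → ℝ) = 1 := by simp [enorm_eq_norm_toLp]
  calc sigmaMin P * sigmaMin P⁻¹ ≤ sigmaMin P * _root_.enorm (P⁻¹ *ᵥ Pi.single i 1) :=
        mul_le_mul_of_nonneg_left (sigmaMin_le _ he) (sigmaMin_nonneg P)
    _ ≤ _root_.enorm ((P * P⁻¹) *ᵥ Pi.single i 1) := by
        rw [← mulVec_mulVec]; exact sigmaMin_mul_enorm_le _ _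
    _ ≤ 1 := by
        by_cases hP : IsUnit P.det
        · rw [mul_nonsing_inv _ hP, one_mulVec, he]
        · rw [nonsing_inv_apply_not_isUnit _ hP, mul_zero, zero_mulVec]
          simp [enorm_eq_norm_toLp]

end SigmaMin

theorem mu_min_G_bound_general {N K : ℕ}
    (U : Matrix (Fin N) (Fin K) ℝ) (B₁ P : Matrix (Fin K) (Fin K) ℝ) (β₂ : ℝ)
    (hU : Uᵀ * U = 1)
    (hstat : |β₂| + sigma1 B₁ < 1)
    (G : Matrix (Fin N) (Fin N) ℝ)
    (hG : G = U * B₁ * Uᵀ + β₂ • (1 : Matrix (Fin N) (Fin N) ℝ)) :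
    ∀ z : ℂ, ‖z‖ = 1 →
      IsUnit (z • (1 : Matrix (Fin N) (Fin N) ℂ) - G.map (algebraMap ℝ ℂ)) ∧
      ∀ μ ∈ spectrum ℂ
          ((z • (1 : Matrix (Fin N) (Fin N) ℂ) - G.map (algebraMap ℝ ℂ))ᴴ *
            (z • (1 : Matrix (Fin N) (Fin N) ℂ) - G.map (algebraMap ℝ ℂ))),
        (1 - |β₂| - sigma1 B₁) ^ 2 * sigmaMin P ^ 2 * sigmaMin P⁻¹ ^ 2 ≤ μ.re := by
  intro z hz
  set c := 1 - |β₂| - sigma1 B₁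
  have hGc : ‖G.map (algebraMap ℝ ℂ)‖ ≤ |β₂| + sigma1 B₁ := by
    rw [← conjTranspose_eq_transpose_of_trivial] at hU hG
    calc ‖G.map (algebraMap ℝ ℂ)‖ ≤ ‖G‖ := l2_opNorm_map_ofReal_le G
      _ ≤ ‖B₁‖ + ‖β₂‖ := hG ▸ l2_opNorm_mul_mul_conjTranspose_add_smul_one_le hU B₁ β₂
      _ = |β₂| + sigma1 B₁ := by rw [sigma1_eq_l2_opNorm, Real.norm_eq_abs, add_comm]
  have hbelow : ∀ v, c * ‖toLp 2 v‖ ≤ ‖toLp 2 ((z • 1 - G.map (algebraMap ℝ ℂ)) *ᵥ v)‖ :=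
    fun v => (mul_le_mul_of_nonneg_right (by rw [hz]; linarith) (norm_nonneg _)).trans
      (sub_l2_opNorm_mul_norm_le _ z v)
  refine ⟨isUnit_of_mul_norm_le (by linarith) hbelow, fun μ hμ => ?_⟩
  calc c ^ 2 * sigmaMin P ^ 2 * sigmaMin P⁻¹ ^ 2 = c ^ 2 * (sigmaMin P * sigmaMin P⁻¹) ^ 2 := by
        ring
    _ ≤ c ^ 2 := mul_le_of_le_one_right (sq_nonneg c) <|
        pow_le_one₀ (mul_nonneg (sigmaMin_nonneg P) (sigmaMin_nonneg _))
          (sigmaMin_mul_sigmaMin_inv_le_one P)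
    _ ≤ μ.re := sq_le_re_of_mem_spectrum_conjTranspose_mul_self (by linarith) hbelow hμ

theorem mu_min_G_bound {N K : ℕ}
    (U : Matrix (Fin N) (Fin K) ℝ) (B₁ P D : Matrix (Fin K) (Fin K) ℝ) (β₂ : ℝ)
    (hU : Uᵀ * U = 1) (hB : B₁ = P * D * P⁻¹) (hD : D.IsDiag) (hP : IsUnit P)
    (hstat : |β₂| + sigma1 B₁ < 1)
    (G : Matrix (Fin N) (Fin N) ℝ)
    (hG : G = U * B₁ * Uᵀ + β₂ • (1 : Matrix (Fin N) (Fin N) ℝ)) :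
    ∀ z : ℂ, ‖z‖ = 1 →
      IsUnit (z • (1 : Matrix (Fin N) (Fin N) ℂ) - G.map (algebraMap ℝ ℂ)) ∧
      ∀ μ ∈ spectrum ℂ
          ((z • (1 : Matrix (Fin N) (Fin N) ℂ) - G.map (algebraMap ℝ ℂ))ᴴ *
            (z • (1 : Matrix (Fin N) (Fin N) ℂ) - G.map (algebraMap ℝ ℂ))),
        (1 - |β₂| - sigma1 B₁) ^ 2 * sigmaMin P ^ 2 * sigmaMin P⁻¹ ^ 2 ≤ μ.re :=
  mu_min_G_bound_general U B₁ P β₂ hU hstat G hG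
end

section
/- Let Θ ∈ {0,1}^{N×K} be a membership matrix (each row has exactly one entry equal to 1) and let P = Θ Q Θᵀ for a symmetric Q ∈ ℝ^{K×K}, with eigen-decomposition P = U D Uᵀ where U ∈ ℝ^{N×K} has orthonormal columns and D is invertible diagonal (rank(P) = K). Then the column spaces of U and Θ coincide: there exists an invertible matrix R ∈ ℝ^{K×K} with Θ = U R. -/
open Matrix

theorem membership_matrix_spectral_representation {N K : ℕ}
    (Θ : Matrix (Fin N) (Fin K) ℝ) (Q : Matrix (Fin K) (Fin K) ℝ)
    (U : Matrix (Fin N) (Fin K) ℝ) (D : Matrix (Fin K) (Fin K) ℝ)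
    (hmem : ∀ i, ∃ k, Θ i k = 1 ∧ ∀ l, l ≠ k → Θ i l = 0)
    (hcol : ∀ k, ∃ i, Θ i k = 1)
    (hQ : Q.IsSymm)
    (hU : Uᵀ * U = 1) (hD : D.IsDiag) (hDunit : IsUnit D)
    (hP : Θ * Q * Θᵀ = U * D * Uᵀ) :
    ∃ R : Matrix (Fin K) (Fin K) ℝ, IsUnit R ∧ Θ = U * R := by
  have hDdet : IsUnit D.det := (isUnit_iff_isUnit_det D).mp hDunit
  set S : Matrix (Fin K) (Fin K) ℝ := Q * Θᵀ * U * D⁻¹ with hSdef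
  have hTS : Θ * S = U := by
    have h1 : Θ * S = (Θ * Q * Θᵀ) * U * D⁻¹ := by
      simp [hSdef, Matrix.mul_assoc]
    rw [h1, hP]
    calc U * D * Uᵀ * U * D⁻¹ = U * D * (Uᵀ * U) * D⁻¹ := by
          rw [Matrix.mul_assoc (U * D) Uᵀ U]
      _ = U * (D * D⁻¹) := by rw [hU, Matrix.mul_one, Matrix.mul_assoc]
      _ = U := by rw [Matrix.mul_nonsing_inv D hDdet, Matrix.mul_one]
  have hkey : Sᵀ * (Θᵀ * Θ) * S = 1 := by
    have : (Θ * S)ᵀ * (Θ * S) = 1 := by rw [hTS]; exact hU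
    rw [Matrix.transpose_mul] at this
    rw [← this]
    simp only [Matrix.mul_assoc]
  have hSdet : IsUnit S.det := by
    have hd := congrArg Matrix.det hkey
    rw [Matrix.det_mul, Matrix.det_mul, Matrix.det_one, Matrix.det_transpose] at hd
    refine isUnit_iff_ne_zero.mpr fun h => ?_
    rw [h] at hd
    simp at hd
  refine ⟨S⁻¹, ?_, ?_⟩
  · exact isUnit_nonsing_inv_iff.mpr ((isUnit_iff_isUnit_det S).mpr hSdet)
  · rw [← hTS, Matrix.mul_assoc, Matrix.mul_nonsing_inv S hSdet, Matrix.mul_one]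
end
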